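/- Let ε > 0 and let f ∈ H¹(0,L), F ∈ H³(0,L) with F'(0) = F'(L) = 0 and F − ε²·F'' = f on (0,L). Then ‖F'‖_{L²(0,L)} ≤ ‖f'‖_{L²(0,L)}. -/

import Mathlib

/-!
Differentiating `F - ε² F'' = f` gives `f' = g - ε² g''` for `g = F'`, which vanishes at both
endpoints. Expanding the square and integrating the cross term by parts,
`∫ (g - ε² g'')² = ∫ g² + 2ε² ∫ g'² + ε⁴ ∫ g''² ≥ ∫ g²`.
-/

open Set intervalIntegral

theorem integral_mul_deriv_deriv_eq_neg_integral_sq {g g' g'' : ℝ → ℝ} {a b : ℝ}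
    (hg : ∀ x ∈ uIcc a b, HasDerivAt g (g' x) x) (hg' : ∀ x ∈ uIcc a b, HasDerivAt g' (g'' x) x)
    (hint' : IntervalIntegrable g' MeasureTheory.volume a b)
    (hint'' : IntervalIntegrable g'' MeasureTheory.volume a b) (ha : g a = 0) (hb : g b = 0) :
    ∫ x in a..b, g x * g'' x = -∫ x in a..b, g' x ^ 2 := by
  rw [integral_mul_deriv_eq_deriv_mul hg hg' hint' hint'', ha, hb]
  simp [sq]

theorem integral_sq_le_integral_sq_sub_mul_deriv_deriv {g : ℝ → ℝ} {a b c : ℝ} (hab : a ≤ b)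
    (hc : 0 ≤ c) (hg : ContDiff ℝ 2 g) (ha : g a = 0) (hb : g b = 0) :
    ∫ x in a..b, g x ^ 2 ≤ ∫ x in a..b, (g x - c * deriv (deriv g) x) ^ 2 := by
  set g' := deriv g
  set g'' := deriv g'
  have hg₁ : ContDiff ℝ 1 g' := hg.deriv'
  have hg₀ : Continuous g'' := hg₁.continuous_deriv le_rfl
  have hparts : ∫ x in a..b, g x * g'' x = -∫ x in a..b, g' x ^ 2 :=
    integral_mul_deriv_deriv_eq_neg_integral_sq
      (fun x _ ↦ (hg.differentiable two_ne_zero x).hasDerivAt)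
      (fun x _ ↦ (hg₁.differentiable one_ne_zero x).hasDerivAt)
      (hg₁.continuous.intervalIntegrable a b) (hg₀.intervalIntegrable a b) ha hb
  have hgc : Continuous g := hg.continuous
  have hg'c : Continuous g' := hg₁.continuous
  have hexpand : ∫ x in a..b, (g x - c * g'' x) ^ 2 =
      (∫ x in a..b, g x ^ 2) + 2 * c * (∫ x in a..b, g' x ^ 2) + c ^ 2 * ∫ x in a..b, g'' x ^ 2 := by
    calc ∫ x in a..b, (g x - c * g'' x) ^ 2
        = ∫ x in a..b, (g x ^ 2 - 2 * c * (g x * g'' x) + c ^ 2 * g'' x ^ 2) :=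
          integral_congr fun x _ ↦ by ring
      _ = (∫ x in a..b, g x ^ 2) - 2 * c * (∫ x in a..b, g x * g'' x)
            + c ^ 2 * ∫ x in a..b, g'' x ^ 2 := by
          rw [integral_add, integral_sub, integral_const_mul, integral_const_mul] <;>
            exact Continuous.intervalIntegrable (by fun_prop) a b
      _ = _ := by rw [hparts]; ring
  have hg'_sq : 0 ≤ ∫ x in a..b, g' x ^ 2 := integral_nonneg hab fun x _ ↦ sq_nonneg _
  have hg''_sq : 0 ≤ ∫ x in a..b, g'' x ^ 2 := integral_nonneg hab fun x _ ↦ sq_nonneg _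
  rw [hexpand]
  linarith [mul_nonneg hc hg'_sq, mul_nonneg (sq_nonneg c) hg''_sq]

theorem stmt_5_general (L ε : ℝ) (hL : 0 < L) (f F : ℝ → ℝ)
    (hF : ContDiff ℝ 3 F)
    (hbc0 : deriv F 0 = 0) (hbcL : deriv F L = 0)
    (heq : ∀ x ∈ Set.Ioo 0 L, F x - ε ^ 2 * deriv (deriv F) x = f x) :
    Real.sqrt (∫ x in (0:ℝ)..L, (deriv F x) ^ 2) ≤
      Real.sqrt (∫ x in (0:ℝ)..L, (deriv f x) ^ 2) := by
  have hF' : ContDiff ℝ 2 (deriv F) := hF.deriv'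
  have hF'' : ContDiff ℝ 1 (deriv (deriv F)) := hF'.deriv'
  have hf' : EqOn (deriv f) (fun x ↦ deriv F x - ε ^ 2 * deriv (deriv (deriv F)) x) (Ioo 0 L) :=
    fun x hx ↦ ((show EqOn _ f (Ioo 0 L) from heq).deriv isOpen_Ioo hx).symm.trans
      ((hF.differentiable three_ne_zero x).hasDerivAt.sub
        ((hF''.differentiable one_ne_zero x).hasDerivAt.const_mul _)).deriv
  have hf'_sq : ∫ x in (0:ℝ)..L, deriv f x ^ 2 =
      ∫ x in (0:ℝ)..L, (deriv F x - ε ^ 2 * deriv (deriv (deriv F)) x) ^ 2 :=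
    integral_congr_Ioo_of_le hL.le fun x hx ↦ by simp only [hf' hx]
  rw [hf'_sq]
  exact Real.sqrt_le_sqrt <|
    integral_sq_le_integral_sq_sub_mul_deriv_deriv hL.le (sq_nonneg ε) hF' hbc0 hbcL

/-- If `F - ε² F'' = f` on `(0,L)` with homogeneous Neumann boundary conditions,
then `‖F'‖_{L²(0,L)} ≤ ‖f'‖_{L²(0,L)}`. -/
theorem stmt_5 (L ε : ℝ) (hL : 0 < L) (hε : 0 < ε) (f F : ℝ → ℝ)
    (hf : ContDiff ℝ 1 f) (hF : ContDiff ℝ 3 F)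
    (hbc0 : deriv F 0 = 0) (hbcL : deriv F L = 0)
    (heq : ∀ x ∈ Set.Ioo 0 L, F x - ε ^ 2 * deriv (deriv F) x = f x) :
    Real.sqrt (∫ x in (0:ℝ)..L, (deriv F x) ^ 2) ≤
      Real.sqrt (∫ x in (0:ℝ)..L, (deriv f x) ^ 2) :=
  stmt_5_general L ε hL f F hF hbc0 hbcL heq
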